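/- For |q|<1, ∑_{i,j≥0} q^{((i-j)^2+i+j)/2} / ((q;q)_i (q;q)_j) = (q^2;q^2)_∞^2 / (q;q)_∞^3. -/

import Mathlib

open scoped BigOperators

noncomputable def qPoch (a q : ℂ) (n : ℕ) : ℂ :=
  ∏ k ∈ Finset.range n, (1 - a * q ^ k)

noncomputable def qPochInf (a q : ℂ) : ℂ :=
  ∏' k : ℕ, (1 - a * q ^ k)

/-!
Since `((i - j)² + i + j) / 2 = C(i+1, 2) + C(j+1, 2) - i j`, the row `i` of the double sum is
`q^C(i+1, 2) / (q;q)_i` times Euler's series `E(z) = ∑ q^C(j, 2) z^j / (q;q)_j` at `z = q / q^i`.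
Iterating the functional equation `E(z) = (1 + z) E(z q)` and letting `z q^N → 0` gives Euler's
identity `E(z) = (-z;q)_∞`; stepping down in `i` with the same equation gives the row sum
`q^i (-1;q)_i (-q;q)_∞ / (q;q)_i`. The partial sums of `∑ q^i (-1;q)_i / (q;q)_i` telescope to
`(-q;q)_N / (q;q)_N`, and `(q²;q²)_∞ = (q;q)_∞ (-q;q)_∞` finishes.
-/

open Filter Finset Topology

section

variable {a q : ℂ}

lemma qPoch_succ (a q : ℂ) (n : ℕ) : qPoch a q (n + 1) = qPoch a q n * (1 - a * q ^ n) :=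
  prod_range_succ _ _

lemma qPoch_neg_one_succ (q : ℂ) (n : ℕ) : qPoch (-1) q (n + 1) = 2 * qPoch (-q) q n := by
  rw [qPoch, prod_range_succ', qPoch, mul_comm]
  congr 1
  · norm_num
  · exact prod_congr rfl fun k _ => by ring

lemma one_sub_mul_pow_ne_zero (ha : ‖a‖ < 1) (hq : ‖q‖ ≤ 1) (k : ℕ) :
    1 - a * q ^ k ≠ 0 := by
  refine sub_ne_zero.2 fun h => ?_
  have : ‖a * q ^ k‖ < 1 := by
    rw [norm_mul, norm_pow]
    exact (mul_le_of_le_one_right (norm_nonneg a) (pow_le_one₀ (norm_nonneg q) hq)).trans_lt ha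
  simp [← h] at this

lemma qPoch_ne_zero (ha : ‖a‖ < 1) (hq : ‖q‖ ≤ 1) (n : ℕ) : qPoch a q n ≠ 0 :=
  prod_ne_zero_iff.2 fun k _ => one_sub_mul_pow_ne_zero ha hq k

lemma summable_norm_neg_mul_pow (a : ℂ) (hq : ‖q‖ < 1) :
    Summable fun k : ℕ => ‖-(a * q ^ k)‖ := by
  simpa [norm_mul, norm_pow] using
    (summable_geometric_of_lt_one (norm_nonneg q) hq).mul_left ‖a‖

lemma multipliable_one_sub_mul_pow (a : ℂ) (hq : ‖q‖ < 1) :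
    Multipliable fun k : ℕ => 1 - a * q ^ k := by
  simpa [← sub_eq_add_neg] using multipliable_one_add_of_summable (summable_norm_neg_mul_pow a hq)

lemma tendsto_qPoch (a : ℂ) (hq : ‖q‖ < 1) :
    Tendsto (qPoch a q) atTop (𝓝 (qPochInf a q)) :=
  (multipliable_one_sub_mul_pow a hq).tendsto_prod_tprod_nat

lemma qPochInf_ne_zero (ha : ‖a‖ < 1) (hq : ‖q‖ < 1) : qPochInf a q ≠ 0 := by
  simpa [qPochInf, ← sub_eq_add_neg] using tprod_one_add_ne_zero_of_summable
    (by simpa [← sub_eq_add_neg] using one_sub_mul_pow_ne_zero ha hq.le)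
    (summable_norm_neg_mul_pow a hq)

lemma qPochInf_sq_sq (hq : ‖q‖ < 1) :
    qPochInf (q ^ 2) (q ^ 2) = qPochInf q q * qPochInf (-q) q := by
  rw [qPochInf, qPochInf, qPochInf, ← (multipliable_one_sub_mul_pow q hq).tprod_mul
    (multipliable_one_sub_mul_pow (-q) hq)]
  exact tprod_congr fun k => by ring

lemma Nat.add_one_choose_two (n : ℕ) : (n + 1).choose 2 = n.choose 2 + n := by
  rw [Nat.choose_succ_succ' n 1, Nat.choose_one_right, add_comm]

noncomputable def eulerTerm (q z : ℂ) (j : ℕ) : ℂ := q ^ j.choose 2 * z ^ j / qPoch q q j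

lemma eulerTerm_zero (q z : ℂ) : eulerTerm q z 0 = 1 := by simp [eulerTerm, qPoch]

lemma eulerTerm_mul_right (q z y : ℂ) (j : ℕ) :
    eulerTerm q (z * y) j = eulerTerm q z j * y ^ j := by
  rw [eulerTerm, eulerTerm, mul_pow]
  ring

lemma eulerTerm_succ (hq : ‖q‖ < 1) (z : ℂ) (j : ℕ) :
    eulerTerm q z (j + 1) = eulerTerm q z j * (q ^ j * z / (1 - q * q ^ j)) := by
  have := qPoch_ne_zero hq hq.le j
  have := one_sub_mul_pow_ne_zero hq hq.le j
  rw [eulerTerm, eulerTerm, Nat.add_one_choose_two, pow_add, qPoch_succ]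
  field_simp
  ring

lemma summable_norm_eulerTerm (hq : ‖q‖ < 1) (z : ℂ) :
    Summable fun j => ‖eulerTerm q z j‖ := by
  refine summable_of_ratio_norm_eventually_le (r := 1 / 2) (by norm_num) ?_
  have hpow := tendsto_pow_atTop_nhds_zero_of_norm_lt_one hq
  have hratio : Tendsto (fun j : ℕ => ‖q ^ j * z / (1 - q * q ^ j)‖) atTop (𝓝 0) := by
    simpa using ((hpow.mul_const z).div (tendsto_const_nhds.sub (hpow.const_mul q))
      (by simp)).norm
  filter_upwards [hratio.eventually (gt_mem_nhds (by norm_num : (0 : ℝ) < 1 / 2))] with j hj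
  rw [norm_norm, norm_norm, eulerTerm_succ hq, norm_mul, mul_comm]
  exact mul_le_mul_of_nonneg_right hj.le (norm_nonneg _)

lemma eulerTerm_succ_eq_add (hq : ‖q‖ < 1) (z : ℂ) (j : ℕ) :
    eulerTerm q z (j + 1) = eulerTerm q (z * q) (j + 1) + z * eulerTerm q (z * q) j := by
  have := one_sub_mul_pow_ne_zero hq hq.le j
  have key : q ^ j * z / (1 - q * q ^ j) =
      q ^ j * z / (1 - q * q ^ j) * q ^ (j + 1) + z * q ^ j := by
    rw [div_mul_eq_mul_div, div_add' _ _ _ this]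
    ring
  rw [eulerTerm_mul_right, eulerTerm_mul_right, eulerTerm_succ hq]
  linear_combination eulerTerm q z j * key

lemma tsum_eulerTerm_eq_one_add_mul (hq : ‖q‖ < 1) (z : ℂ) :
    ∑' j, eulerTerm q z j = (1 + z) * ∑' j, eulerTerm q (z * q) j := by
  have hz := (summable_norm_eulerTerm hq z).of_norm
  have hzq := (summable_norm_eulerTerm hq (z * q)).of_norm
  calc ∑' j, eulerTerm q z j = 1 + ∑' j, eulerTerm q z (j + 1) := by
        rw [hz.tsum_eq_zero_add, eulerTerm_zero]
    _ = 1 + (∑' j, eulerTerm q (z * q) (j + 1) + z * ∑' j, eulerTerm q (z * q) j) := by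
        rw [← tsum_mul_left, ← ((summable_nat_add_iff 1).2 hzq).tsum_add (hzq.mul_left z),
          tsum_congr (eulerTerm_succ_eq_add hq z)]
    _ = (1 + z) * ∑' j, eulerTerm q (z * q) j := by
        rw [hzq.tsum_eq_zero_add, eulerTerm_zero]
        ring

lemma tsum_eulerTerm_eq_qPoch_mul (hq : ‖q‖ < 1) (z : ℂ) (N : ℕ) :
    ∑' j, eulerTerm q z j = qPoch (-z) q N * ∑' j, eulerTerm q (z * q ^ N) j := by
  induction N with
  | zero => simp [qPoch]
  | succ N ih =>
    rw [ih, tsum_eulerTerm_eq_one_add_mul hq (z * q ^ N), qPoch_succ, pow_succ, mul_assoc z]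
    ring

lemma tendsto_tsum_eulerTerm_mul_pow (hq : ‖q‖ < 1) (z : ℂ) :
    Tendsto (fun N : ℕ => ∑' j, eulerTerm q (z * q ^ N) j) atTop (𝓝 1) := by
  have hlim (j : ℕ) : Tendsto (fun N : ℕ => eulerTerm q (z * q ^ N) j) atTop
      (𝓝 (eulerTerm q z j * 0 ^ j)) := by
    simp_rw [eulerTerm_mul_right]
    exact ((tendsto_pow_atTop_nhds_zero_of_norm_lt_one hq).pow j).const_mul _
  have hbound (N j : ℕ) : ‖eulerTerm q (z * q ^ N) j‖ ≤ ‖eulerTerm q z j‖ := by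
    rw [eulerTerm_mul_right, norm_mul, norm_pow, norm_pow]
    exact mul_le_of_le_one_right (norm_nonneg _)
      (pow_le_one₀ (by positivity) (pow_le_one₀ (norm_nonneg _) hq.le))
  have := tendsto_tsum_of_dominated_convergence (summable_norm_eulerTerm hq z) hlim
    (Eventually.of_forall hbound)
  rwa [tsum_eq_single 0 fun j hj => by simp [hj], pow_zero, mul_one, eulerTerm_zero] at this

theorem tsum_eulerTerm (hq : ‖q‖ < 1) (z : ℂ) : ∑' j, eulerTerm q z j = qPochInf (-z) q :=
  tendsto_nhds_unique (tendsto_const_nhds.congr (tsum_eulerTerm_eq_qPoch_mul hq z))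
    (by simpa using (tendsto_qPoch (-z) hq).mul (tendsto_tsum_eulerTerm_mul_pow hq z))

lemma pow_choose_mul_tsum_eulerTerm (hq : ‖q‖ < 1) (hq0 : q ≠ 0) (i : ℕ) :
    q ^ (i + 1).choose 2 * ∑' j, eulerTerm q (q / q ^ i) j =
      q ^ i * qPoch (-1) q i * qPochInf (-q) q := by
  induction i with
  | zero => simp [tsum_eulerTerm hq, qPoch]
  | succ i ih =>
    have hqi : q ^ i ≠ 0 := pow_ne_zero i hq0
    rw [tsum_eulerTerm_eq_one_add_mul hq, show q / q ^ (i + 1) * q = q / q ^ i by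
      rw [pow_succ]; field_simp, Nat.add_one_choose_two, pow_add, qPoch_succ]
    have hfactor : q ^ (i + 1) * (1 + q / q ^ (i + 1)) = q * (1 + q ^ i) := by
      rw [pow_succ]; field_simp; ring
    linear_combination (q * (1 + q ^ i)) * ih +
      q ^ (i + 1).choose 2 * (∑' j, eulerTerm q (q / q ^ i) j) * hfactor

lemma sum_range_succ_pow_mul_qPoch_neg_one_div (hq : ‖q‖ < 1) (N : ℕ) :
    ∑ i ∈ range (N + 1), q ^ i * qPoch (-1) q i / qPoch q q i =
      qPoch (-q) q N / qPoch q q N := by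
  induction N with
  | zero => simp [qPoch]
  | succ N ih =>
    have := qPoch_ne_zero hq hq.le N
    have := one_sub_mul_pow_ne_zero hq hq.le N
    rw [sum_range_succ, ih, qPoch_succ q, qPoch_succ (-q), qPoch_neg_one_succ]
    field_simp
    ring

lemma hasSum_pow_mul_qPoch_neg_one_div (hq : ‖q‖ < 1) :
    HasSum (fun i => q ^ i * qPoch (-1) q i / qPoch q q i) (qPochInf (-q) q / qPochInf q q) := by
  obtain ⟨A, hA⟩ := (tendsto_qPoch (-1) hq).norm.bddAbove_range
  obtain ⟨B, hB⟩ := ((tendsto_qPoch q hq).inv₀ (qPochInf_ne_zero hq hq)).norm.bddAbove_range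
  have hsum : Summable fun i => q ^ i * qPoch (-1) q i / qPoch q q i := by
    refine Summable.of_norm_bounded
      ((summable_geometric_of_lt_one (norm_nonneg q) hq).mul_right (A * B)) fun i => ?_
    have hAi : ‖qPoch (-1) q i‖ ≤ A := hA (Set.mem_range_self i)
    have hBi : ‖(qPoch q q i)⁻¹‖ ≤ B := hB (Set.mem_range_self i)
    rw [div_eq_mul_inv, norm_mul, norm_mul, norm_pow, mul_assoc]
    exact mul_le_mul_of_nonneg_left
      (mul_le_mul hAi hBi (norm_nonneg _) ((norm_nonneg _).trans hAi)) (by positivity)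
  rw [hsum.hasSum_iff_tendsto_nat, ← tendsto_add_atTop_iff_nat 1]
  simp_rw [sum_range_succ_pow_mul_qPoch_neg_one_div hq]
  exact (tendsto_qPoch (-q) hq).div (tendsto_qPoch q hq) (qPochInf_ne_zero hq hq)

lemma sq_sub_add_add_eq_two_mul (i j : ℕ) :
    ((i : ℤ) - j) ^ 2 + i + j = 2 * ((i + 1).choose 2 + (j + 1).choose 2 - i * j) := by
  have hi : ((i : ℤ) + 1) * i = (i + 1).choose 2 * 2 := by
    exact_mod_cast (Nat.choose_one_right i ▸ Nat.add_one_mul_choose_eq i 1)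
  have hj : ((j : ℤ) + 1) * j = (j + 1).choose 2 * 2 := by
    exact_mod_cast (Nat.choose_one_right j ▸ Nat.add_one_mul_choose_eq j 1)
  linear_combination hi + hj

lemma two_mul_sq_sub_add_add_div_two (i j : ℕ) :
    2 * ((((i : ℤ) - j) ^ 2 + i + j) / 2) = ((i : ℤ) - j) ^ 2 + i + j :=
  Int.mul_ediv_cancel' ⟨_, sq_sub_add_add_eq_two_mul i j⟩

lemma zpow_sq_sub_add_add_div_two (hq0 : q ≠ 0) (i j : ℕ) :
    q ^ ((((i : ℤ) - j) ^ 2 + i + j) / 2) =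
      q ^ (i + 1).choose 2 * (q ^ j.choose 2 * (q / q ^ i) ^ j) := by
  rw [sq_sub_add_add_eq_two_mul, Int.mul_ediv_cancel_left _ two_ne_zero, ← Nat.cast_mul,
    zpow_sub₀ hq0, zpow_add₀ hq0, zpow_natCast, zpow_natCast, zpow_natCast,
    Nat.add_one_choose_two j, pow_add, div_pow, ← pow_mul]
  ring

lemma zpow_div_qPoch_mul_qPoch_eq (hq0 : q ≠ 0) (i j : ℕ) :
    q ^ ((((i : ℤ) - j) ^ 2 + i + j) / 2) / (qPoch q q i * qPoch q q j) =
      q ^ (i + 1).choose 2 / qPoch q q i * eulerTerm q (q / q ^ i) j := by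
  rw [zpow_sq_sub_add_add_div_two hq0, eulerTerm]
  ring

lemma norm_zpow_sq_sub_add_add_div_two_le (hq0 : q ≠ 0) (hq : ‖q‖ ≤ 1) (i j : ℕ) :
    ‖q ^ ((((i : ℤ) - j) ^ 2 + i + j) / 2)‖ ≤ √‖q‖ ^ i * √‖q‖ ^ j := by
  set s := √‖q‖
  have hs : 0 < s := Real.sqrt_pos.2 (norm_pos_iff.2 hq0)
  have hqs : ‖q‖ = s ^ 2 := (Real.sq_sqrt (norm_nonneg q)).symm
  calc ‖q ^ ((((i : ℤ) - j) ^ 2 + i + j) / 2)‖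
      = s ^ (((i : ℤ) - j) ^ 2 + i + j) := by
        rw [norm_zpow, hqs, ← zpow_natCast, ← zpow_mul, Nat.cast_ofNat,
          two_mul_sq_sub_add_add_div_two]
    _ ≤ s ^ ((i + j : ℕ) : ℤ) :=
        zpow_le_zpow_right_of_le_one₀ hs (Real.sqrt_le_one.2 hq) (by push_cast; nlinarith)
    _ = s ^ i * s ^ j := by rw [zpow_natCast, pow_add]

lemma summable_zpow_div_qPoch_mul_qPoch (hq : ‖q‖ < 1) (hq0 : q ≠ 0) :
    Summable fun p : ℕ × ℕ =>
      q ^ ((((p.1 : ℤ) - p.2) ^ 2 + p.1 + p.2) / 2) / (qPoch q q p.1 * qPoch q q p.2) := by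
  obtain ⟨B, hB⟩ := ((tendsto_qPoch q hq).inv₀ (qPochInf_ne_zero hq hq)).norm.bddAbove_range
  have hgeom := summable_geometric_of_lt_one (Real.sqrt_nonneg ‖q‖)
    ((Real.sqrt_lt' one_pos).2 (by simpa using hq))
  refine Summable.of_norm_bounded ((hgeom.mul_of_nonneg hgeom (fun _ => by positivity)
    (fun _ => by positivity)).mul_right (B * B)) fun ⟨i, j⟩ => ?_
  have hBi : ‖(qPoch q q i)⁻¹‖ ≤ B := hB (Set.mem_range_self i)
  have hBj : ‖(qPoch q q j)⁻¹‖ ≤ B := hB (Set.mem_range_self j)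
  rw [div_eq_mul_inv, mul_inv, norm_mul, norm_mul]
  exact mul_le_mul (norm_zpow_sq_sub_add_add_div_two_le hq0 hq.le i j)
    (mul_le_mul hBi hBj (norm_nonneg _) ((norm_nonneg _).trans hBi)) (by positivity)
    (by positivity)

lemma tsum_zero_zpow_sq_sub_add_add_div_two :
    ∑' p : ℕ × ℕ, (0 : ℂ) ^ ((((p.1 : ℤ) - p.2) ^ 2 + p.1 + p.2) / 2) = 1 := by
  rw [tsum_eq_single (0, 0)]
  · simp
  rintro ⟨i, j⟩ hij
  refine zero_zpow _ fun h => hij ?_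
  have := two_mul_sq_sub_add_add_div_two i j
  rw [h] at this
  have hi : i = 0 := by nlinarith [sq_nonneg ((i : ℤ) - j)]
  have hj : j = 0 := by nlinarith [sq_nonneg ((i : ℤ) - j)]
  rw [hi, hj]

end

theorem stmt_3 (q : ℂ) (hq : ‖q‖ < 1) :
    ∑' p : ℕ × ℕ,
      q ^ ((((p.1 : ℤ) - p.2) ^ 2 + p.1 + p.2) / 2) /
        (qPoch q q p.1 * qPoch q q p.2)
      = (qPochInf (q ^ 2) (q ^ 2)) ^ 2 / (qPochInf q q) ^ 3 := by
  rcases eq_or_ne q 0 with rfl | hq0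
  · simpa [qPoch, qPochInf] using tsum_zero_zpow_sq_sub_add_add_div_two
  have hrow (i : ℕ) : ∑' j : ℕ, q ^ ((((i : ℤ) - j) ^ 2 + i + j) / 2) /
      (qPoch q q i * qPoch q q j) = q ^ i * qPoch (-1) q i / qPoch q q i * qPochInf (-q) q := by
    rw [tsum_congr (zpow_div_qPoch_mul_qPoch_eq hq0 i), tsum_mul_left, div_mul_eq_mul_div,
      pow_choose_mul_tsum_eulerTerm hq hq0, div_mul_eq_mul_div, mul_div_right_comm]
  rw [(summable_zpow_div_qPoch_mul_qPoch hq hq0).tsum_prod, tsum_congr hrow, tsum_mul_right,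
    (hasSum_pow_mul_qPoch_neg_one_div hq).tsum_eq, qPochInf_sq_sq hq]
  field_simp [qPochInf_ne_zero hq hq]
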